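/- Let S be skew-symmetric and M symmetric positive definite, and let the Crank–Nicolson SAV step be (zⁿ⁺¹ − zⁿ)/h = S μ, with μ = M (zⁿ⁺¹+zⁿ)/2 + r̄ g, rⁿ⁺¹ − rⁿ = ½ gᵀ (zⁿ⁺¹ − zⁿ), where g ∈ ℝ^n is fixed and r̄ = (rⁿ⁺¹+rⁿ)/2. Then the discrete modified energy H̃(z,r) = ½ zᵀ M z + r² − C is exactly conserved: H̃(zⁿ⁺¹, rⁿ⁺¹) = H̃(zⁿ, rⁿ). If instead the symmetric part of S is negative semidefinite, then H̃(zⁿ⁺¹, rⁿ⁺¹) − H̃(zⁿ, rⁿ) = h μᵀ S μ ≤ 0. -/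

import Mathlib

open Matrix

noncomputable def symPart {m : Type*} [Fintype m] (A : Matrix m m ℝ) : Matrix m m ℝ :=
  (1/2 : ℝ) • (A + Aᵀ)

def NegSemidef {m : Type*} [Fintype m] (A : Matrix m m ℝ) : Prop :=
  Aᵀ = A ∧ ∀ x : m → ℝ, x ⬝ᵥ A.mulVec x ≤ 0

noncomputable def modEnergy {n : ℕ} (M : Matrix (Fin n) (Fin n) ℝ) (C : ℝ)
    (z : Fin n → ℝ) (r : ℝ) : ℝ :=
  (1/2 : ℝ) * (z ⬝ᵥ M.mulVec z) + r ^ 2 - C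

/-! The SAV variable turns the nonlinear energy into the quadratic form `½ zᵀMz + r²`,
and the Crank–Nicolson step is built so that its increment is exactly `μ ⬝ (zⁿ⁺¹ − zⁿ)`:
the midpoint `M`-term telescopes the quadratic part by symmetry of `M`, and the
`r`-update telescopes `r²`.  Substituting `zⁿ⁺¹ − zⁿ = h Sμ` leaves `h μᵀSμ`, which vanishes
for skew `S` and only sees the (nonpositive) symmetric part of `S` in general. -/

section QuadraticForm

variable {m : Type*} [Fintype m]

theorem dotProduct_mulVec_self_eq_zero_of_transpose_eq_neg {R : Type*} [CommRing R]
    [NoZeroDivisors R] [CharZero R] {S : Matrix m m R} (hS : Sᵀ = -S) (x : m → R) :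
    x ⬝ᵥ S *ᵥ x = 0 := by
  have h := dotProduct_transpose_mulVec S x x
  rw [hS, neg_mulVec, dotProduct_neg] at h
  exact CharZero.neg_eq_self_iff.mp h

theorem dotProduct_mulVec_symPart (A : Matrix m m ℝ) (x : m → ℝ) :
    x ⬝ᵥ symPart A *ᵥ x = x ⬝ᵥ A *ᵥ x := by
  simp only [symPart, smul_mulVec, add_mulVec, dotProduct_smul, dotProduct_add,
    dotProduct_transpose_mulVec, smul_eq_mul]
  ring

theorem dotProduct_mulVec_self_nonpos_of_negSemidef_symPart {A : Matrix m m ℝ}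
    (hA : NegSemidef (symPart A)) (x : m → ℝ) : x ⬝ᵥ A *ᵥ x ≤ 0 :=
  dotProduct_mulVec_symPart A x ▸ hA.2 x

theorem mulVec_midpoint_dotProduct_sub {R : Type*} [Field R] {M : Matrix m m R}
    (hM : Mᵀ = M) (a b : m → R) :
    M *ᵥ ((1/2 : R) • (a + b)) ⬝ᵥ (a - b) = (1/2) * (a ⬝ᵥ M *ᵥ a) - (1/2) * (b ⬝ᵥ M *ᵥ b) := by
  have hab : b ⬝ᵥ M *ᵥ a = a ⬝ᵥ M *ᵥ b := by
    rw [← dotProduct_transpose_mulVec, hM]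
  rw [dotProduct_comm]
  simp only [mulVec_smul, mulVec_add, dotProduct_smul, sub_dotProduct, dotProduct_add,
    hab, smul_eq_mul]
  ring

end QuadraticForm

theorem modEnergy_sub_modEnergy_eq_dotProduct {n : ℕ} {M : Matrix (Fin n) (Fin n) ℝ}
    (hM : Mᵀ = M) (C : ℝ) {g zn zn1 μ : Fin n → ℝ} {rn rn1 : ℝ}
    (hμ : μ = M *ᵥ ((1/2 : ℝ) • (zn1 + zn)) + ((rn1 + rn) / 2) • g)
    (hrstep : rn1 - rn = (1/2 : ℝ) * (g ⬝ᵥ (zn1 - zn))) :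
    modEnergy M C zn1 rn1 - modEnergy M C zn rn = μ ⬝ᵥ (zn1 - zn) := by
  have hg : g ⬝ᵥ (zn1 - zn) = 2 * (rn1 - rn) := by rw [hrstep]; ring
  rw [hμ, add_dotProduct, mulVec_midpoint_dotProduct_sub hM, smul_dotProduct, hg,
    smul_eq_mul, modEnergy, modEnergy]
  ring

theorem stmt17_general {n : ℕ} (M S : Matrix (Fin n) (Fin n) ℝ)
    (hMsymm : Mᵀ = M)
    (h : ℝ) (hh : 0 < h) (g : Fin n → ℝ) (C : ℝ)
    (zn zn1 μ : Fin n → ℝ) (rn rn1 : ℝ)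
    (hzstep : (h⁻¹ : ℝ) • (zn1 - zn) = S.mulVec μ)
    (hμ : μ = M.mulVec ((1/2 : ℝ) • (zn1 + zn)) + ((rn1 + rn) / 2) • g)
    (hrstep : rn1 - rn = (1/2 : ℝ) * (g ⬝ᵥ (zn1 - zn))) :
    (Sᵀ = -S → modEnergy M C zn1 rn1 = modEnergy M C zn rn)
    ∧ (NegSemidef (symPart S) →
        modEnergy M C zn1 rn1 - modEnergy M C zn rn = h * (μ ⬝ᵥ S.mulVec μ)
        ∧ modEnergy M C zn1 rn1 ≤ modEnergy M C zn rn) := by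
  have hz : zn1 - zn = h • S *ᵥ μ := (inv_smul_eq_iff₀ hh.ne').mp hzstep
  have henergy : modEnergy M C zn1 rn1 - modEnergy M C zn rn = h * (μ ⬝ᵥ S *ᵥ μ) := by
    rw [modEnergy_sub_modEnergy_eq_dotProduct hMsymm C hμ hrstep, hz, dotProduct_smul,
      smul_eq_mul]
  refine ⟨fun hskew => ?_, fun hneg => ⟨henergy, ?_⟩⟩
  · rw [← sub_eq_zero, henergy,
      dotProduct_mulVec_self_eq_zero_of_transpose_eq_neg hskew, mul_zero]
  · rw [← sub_nonpos, henergy]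
    exact mul_nonpos_of_nonneg_of_nonpos hh.le
      (dotProduct_mulVec_self_nonpos_of_negSemidef_symPart hneg μ)

/-- the Crank–Nicolson SAV step
`(zⁿ⁺¹ − zⁿ)/h = Sμ`, `μ = M(zⁿ⁺¹+zⁿ)/2 + r̄ g`, `rⁿ⁺¹ − rⁿ = ½ gᵀ(zⁿ⁺¹ − zⁿ)`,
conserves `H̃(z,r) = ½ zᵀMz + r² − C` when `S` is skew-symmetric; and when the
symmetric part of `S` is negative semidefinite,
`H̃(zⁿ⁺¹,rⁿ⁺¹) − H̃(zⁿ,rⁿ) = h μᵀSμ ≤ 0`. -/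
theorem stmt17 {n : ℕ} (M S : Matrix (Fin n) (Fin n) ℝ)
    (hMsymm : Mᵀ = M) (hMpd : M.PosDef)
    (h : ℝ) (hh : 0 < h) (g : Fin n → ℝ) (C : ℝ)
    (zn zn1 μ : Fin n → ℝ) (rn rn1 : ℝ)
    (hzstep : (h⁻¹ : ℝ) • (zn1 - zn) = S.mulVec μ)
    (hμ : μ = M.mulVec ((1/2 : ℝ) • (zn1 + zn)) + ((rn1 + rn) / 2) • g)
    (hrstep : rn1 - rn = (1/2 : ℝ) * (g ⬝ᵥ (zn1 - zn))) :
    (Sᵀ = -S → modEnergy M C zn1 rn1 = modEnergy M C zn rn)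
    ∧ (NegSemidef (symPart S) →
        modEnergy M C zn1 rn1 - modEnergy M C zn rn = h * (μ ⬝ᵥ S.mulVec μ)
        ∧ modEnergy M C zn1 rn1 ≤ modEnergy M C zn rn) :=
  stmt17_general M S hMsymm h hh g C zn zn1 μ rn rn1 hzstep hμ hrstep
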